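/- Let x_1, …, x_m be unit vectors in ℝ^d with |x_i·x_j| ≤ √(2·log(2m²/δ)/d) for all i ≠ j, for some δ ∈ (0,1), let y_i ∈ {−1,+1}, and assume d ≥ 8·m⁴·log(2m²/δ). Let θ = (w_j, b_j)_{j=1}^n be a KKT point of the margin-maximization problem for the fixed-output-weight network. Then b_j ≥ 0 for every j ∈ [n]. -/

import Mathlib

set_option maxHeartbeats 800000


/-- ReLU. -/
noncomputable def relu (z : ℝ) : ℝ := max z 0

/-- Fixed output weights: +1 for the first n/2 neurons, -1 for the rest. -/
def vsign (n : ℕ) (j : Fin n) : ℝ := if (j : ℕ) < n / 2 then 1 else -1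

/-- 2-layer ReLU network on ℝ^d with fixed output weights ±1. -/
noncomputable def netF {d n : ℕ} (w : Fin n → EuclideanSpace ℝ (Fin d)) (b : Fin n → ℝ)
    (x : EuclideanSpace ℝ (Fin d)) : ℝ :=
  ∑ j, vsign n j * relu ((inner ℝ (w j) x : ℝ) + b j)

/-- KKT point (with multipliers `lam`) of the margin-maximization problem for the
fixed-output-weight network. -/
def IsKKTFixWith {d m n : ℕ} (x : Fin m → EuclideanSpace ℝ (Fin d)) (y : Fin m → ℝ)
    (w : Fin n → EuclideanSpace ℝ (Fin d)) (b : Fin n → ℝ) (lam : Fin m → ℝ) : Prop :=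
  (∀ i, 1 ≤ y i * netF w b (x i)) ∧
  (∀ i, 0 ≤ lam i) ∧
  ∃ s : Fin m → Fin n → ℝ,
    (∀ i j, s i j ∈ Set.Icc (0 : ℝ) 1) ∧
    (∀ i j, 0 < (inner ℝ (w j) (x i) : ℝ) + b j → s i j = 1) ∧
    (∀ i j, (inner ℝ (w j) (x i) : ℝ) + b j < 0 → s i j = 0) ∧
    (∀ j, w j = vsign n j • ∑ i, (lam i * y i * s i j) • x i) ∧
    (∀ j, b j = vsign n j * ∑ i, lam i * y i * s i j) ∧
    (∀ i, lam i * (y i * netF w b (x i) - 1) = 0)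

/-!
Writing the `j`-th neuron as `w = ∑ cᵢ xᵢ`, `b = ∑ cᵢ` with the KKT coefficients
`cᵢ = vⱼ λᵢ yᵢ sᵢⱼ`, the neuron is active at every `xᵢ` with `cᵢ ≠ 0`. If `b < 0`, take `k`
with `c_k` minimal (so `c_k < 0`). Since `|cᵢ| ≤ cᵢ - 2 c_k`, near-orthogonality gives
`⟪w, x_k⟫ + b ≤ (1 + R) b + (1 - (2m - 1) R) c_k < 0`, as soon as `(2m - 1) R < 1`,
which the lower bound on `d` guarantees for `R = √(2 log(2m²/δ)/d)`.
-/

open Finset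

section NearlyOrthonormal

variable {ι E : Type*} [Fintype ι] [DecidableEq ι] [NormedAddCommGroup E] [InnerProductSpace ℝ E]
  {x : ι → E} {c : ι → ℝ} {R : ℝ}

theorem inner_sum_smul_add_sum_le_of_isMin (hx : ∀ i, ‖x i‖ = 1)
    (horth : ∀ i k, i ≠ k → |inner ℝ (x i) (x k)| ≤ R) {k : ι}
    (hmin : ∀ i, c k ≤ c i) (hk : c k ≤ 0) :
    inner ℝ (∑ i, c i • x i) (x k) + ∑ i, c i
      ≤ (1 + R) * ∑ i, c i + (1 - (2 * Fintype.card ι - 1) * R) * c k := by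
  have hsplit : inner ℝ (∑ i, c i • x i) (x k)
      = c k + ∑ i ∈ univ.erase k, c i * inner ℝ (x i) (x k) := by
    rw [sum_inner, ← add_sum_erase _ _ (mem_univ k)]
    simp [real_inner_smul_left, hx]
  have hoff : ∑ i ∈ univ.erase k, c i * inner ℝ (x i) (x k)
      ≤ R * ∑ i ∈ univ.erase k, (c i - 2 * c k) := by
    rw [mul_sum]
    refine sum_le_sum fun i hi => ?_
    have habs : |c i| ≤ c i - 2 * c k := abs_le.2 ⟨by linarith [hmin i], by linarith⟩
    calc c i * inner ℝ (x i) (x k) ≤ |c i| * |inner ℝ (x i) (x k)| :=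
          (le_abs_self _).trans_eq (abs_mul _ _)
      _ ≤ (c i - 2 * c k) * R :=
        mul_le_mul habs (horth i k (ne_of_mem_erase hi)) (abs_nonneg _) (habs.trans' (abs_nonneg _))
      _ = R * (c i - 2 * c k) := mul_comm _ _
  have hsum : ∑ i ∈ univ.erase k, (c i - 2 * c k)
      = ∑ i, c i - 2 * Fintype.card ι * c k + c k := by
    rw [sum_erase_eq_sub (mem_univ k), sum_sub_distrib, sum_const, card_univ, nsmul_eq_mul]
    ring
  rw [hsum] at hoff
  rw [hsplit]
  linarith

theorem bias_nonneg_of_nearly_orthonormal (hx : ∀ i, ‖x i‖ = 1)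
    (horth : ∀ i k, i ≠ k → |inner ℝ (x i) (x k)| ≤ R) (hR0 : 0 ≤ R)
    (hR : (2 * Fintype.card ι - 1) * R < 1) {w : E} {b : ℝ}
    (hw : w = ∑ i, c i • x i) (hb : b = ∑ i, c i)
    (hact : ∀ k, c k < 0 → 0 ≤ inner ℝ w (x k) + b) : 0 ≤ b := by
  by_contra! hneg
  obtain ⟨i, hi⟩ : ∃ i, c i < 0 := by
    by_contra! h
    exact hneg.not_ge (hb ▸ sum_nonneg fun i _ => h i)
  have : Nonempty ι := ⟨i⟩
  obtain ⟨k, -, hmin⟩ := exists_min_image univ c univ_nonempty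
  have hk : c k < 0 := (hmin i (mem_univ i)).trans_lt hi
  have hle := inner_sum_smul_add_sum_le_of_isMin hx horth (fun i => hmin i (mem_univ i)) hk.le
  rw [← hw, ← hb] at hle
  nlinarith [hact k hk]

end NearlyOrthonormal

theorem sub_one_mul_sqrt_lt_one {m d L : ℝ} (hd0 : 0 ≤ d) (hd : 8 * m ^ 4 * L ≤ d) :
    (2 * m - 1) * √(2 * L / d) < 1 := by
  rcases le_or_gt (2 * m - 1) 0 with hm | hm
  · nlinarith [Real.sqrt_nonneg (2 * L / d)]
  have hm0 : 0 < m := by linarith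
  have hsqrt : √(2 * L / d) ≤ 1 / (2 * m ^ 2) := by
    refine Real.sqrt_le_iff.2 ⟨by positivity, div_le_of_le_mul₀ hd0 (by positivity) ?_⟩
    rw [show (1 / (2 * m ^ 2)) ^ 2 * d = d / (4 * m ^ 4) by ring, le_div_iff₀ (by positivity)]
    linarith
  calc (2 * m - 1) * √(2 * L / d) ≤ (2 * m - 1) * (1 / (2 * m ^ 2)) := by gcongr
    _ < 1 := by
        field_simp
        nlinarith

theorem IsKKTFixWith.exists_active_coeffs {d m n : ℕ} {x : Fin m → EuclideanSpace ℝ (Fin d)}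
    {y : Fin m → ℝ} {w : Fin n → EuclideanSpace ℝ (Fin d)} {b : Fin n → ℝ} {lam : Fin m → ℝ}
    (hkkt : IsKKTFixWith x y w b lam) (j : Fin n) :
    ∃ c : Fin m → ℝ, w j = ∑ i, c i • x i ∧ b j = ∑ i, c i ∧
      ∀ i, c i ≠ 0 → 0 ≤ inner ℝ (w j) (x i) + b j := by
  obtain ⟨-, -, s, -, -, hs0, hw, hb, -⟩ := hkkt
  refine ⟨fun i => vsign n j * (lam i * y i * s i j), ?_, by rw [hb j, mul_sum], ?_⟩
  · rw [hw j, smul_sum]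
    simp only [smul_smul]
  · intro i hc
    by_contra! hneg
    simp [hs0 i j hneg] at hc

theorem stmt14_general {d m n : ℕ} (δ : ℝ)
    (x : Fin m → EuclideanSpace ℝ (Fin d)) (y : Fin m → ℝ)
    (hx : ∀ i, ‖x i‖ = 1)
    (horth : ∀ i j, i ≠ j →
      |(inner ℝ (x i) (x j) : ℝ)| ≤ Real.sqrt (2 * Real.log (2 * (m : ℝ) ^ 2 / δ) / d))
    (hd : 8 * (m : ℝ) ^ 4 * Real.log (2 * (m : ℝ) ^ 2 / δ) ≤ (d : ℝ))
    (w : Fin n → EuclideanSpace ℝ (Fin d)) (b : Fin n → ℝ) (lam : Fin m → ℝ)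
    (hkkt : IsKKTFixWith x y w b lam) :
    ∀ j, 0 ≤ b j := by
  intro j
  obtain ⟨c, hw, hb, hact⟩ := hkkt.exists_active_coeffs j
  have hR : (2 * Fintype.card (Fin m) - 1) * √(2 * Real.log (2 * (m : ℝ) ^ 2 / δ) / d) < 1 := by
    rw [Fintype.card_fin]
    exact sub_one_mul_sqrt_lt_one d.cast_nonneg hd
  exact bias_nonneg_of_nearly_orthonormal hx horth (Real.sqrt_nonneg _) hR hw hb
    fun k hk => hact k hk.ne

/-- Lemma B.5: all bias terms of a KKT point are nonnegative. -/
theorem stmt14 {d m n : ℕ} (δ : ℝ) (hδ0 : 0 < δ) (hδ1 : δ < 1)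
    (hn : Even n)
    (x : Fin m → EuclideanSpace ℝ (Fin d)) (y : Fin m → ℝ)
    (hx : ∀ i, ‖x i‖ = 1)
    (hy : ∀ i, y i = 1 ∨ y i = -1)
    (horth : ∀ i j, i ≠ j →
      |(inner ℝ (x i) (x j) : ℝ)| ≤ Real.sqrt (2 * Real.log (2 * (m : ℝ) ^ 2 / δ) / d))
    (hd : 8 * (m : ℝ) ^ 4 * Real.log (2 * (m : ℝ) ^ 2 / δ) ≤ (d : ℝ))
    (w : Fin n → EuclideanSpace ℝ (Fin d)) (b : Fin n → ℝ) (lam : Fin m → ℝ)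
    (hkkt : IsKKTFixWith x y w b lam) :
    ∀ j, 0 ≤ b j :=
  stmt14_general δ x y hx horth hd w b lam hkkt
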